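/- Let k ≥ 5 be an integer and let w be a cubefree binary word of length k + 4 having 00 as a prefix and 11 as a suffix. Then θ(w) ends in 010, and the word u obtained from θ(w) by removing the suffix 010 has 01011 as a prefix, has 11 as a suffix, and does not contain 10101 as a factor. -/

import Mathlib

/-!
Cubefreeness forbids the factors 000 and 111, so `w` begins with 001 and ends with 011
(it has length at least 4). Hence θ(w) begins with θ(001) = 010110 and ends with
θ(011) = 011010, which gives `u`, its prefix and its suffix. An occurrence of 10101 in θ(w)
lies inside θ(111) = 101010 if it starts at an even position and inside θ(000) = 010101
otherwise, so it would give a cube in `w`.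
-/

/-- The Thue–Morse morphism θ (0 ↦ 01, 1 ↦ 10), with 0 = `false`, 1 = `true`,
applied letterwise to a word. -/
def tmMap (w : List Bool) : List Bool :=
  w.flatMap (fun b => if b then [true, false] else [false, true])

/-- A word is cubefree if it contains no non-empty factor of the form `x ++ x ++ x`. -/
def Cubefree (w : List Bool) : Prop :=
  ∀ x : List Bool, x ≠ [] → ¬ (x ++ x ++ x) <:+: w

/-- `w` is a factor of the Thue–Morse word `t = θ^ω(0)`: since the words `θ^m(0)`
are prefixes of `t` whose lengths tend to infinity, this holds iff `w` is an
infix of `θ^m(0)` for some `m`. -/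
def FactorTM (w : List Bool) : Prop :=
  ∃ m : ℕ, w <:+: tmMap^[m] [false]

/-- The binary morphism determined by `h : Bool → List Bool` is cubefree. -/
def CubefreeMorphism (h : Bool → List Bool) : Prop :=
  ∀ w : List Bool, Cubefree w → Cubefree (w.flatMap h)

@[simp]
lemma tmMap_nil : tmMap [] = [] := rfl

@[simp]
lemma tmMap_cons (b : Bool) (w : List Bool) : tmMap (b :: w) = b :: (!b) :: tmMap w := by
  cases b <;> rfl

@[simp]
lemma tmMap_append (v w : List Bool) : tmMap (v ++ w) = tmMap v ++ tmMap w :=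
  List.flatMap_append

lemma length_tmMap (w : List Bool) : (tmMap w).length = 2 * w.length := by
  induction w with
  | nil => rfl
  | cons b w ih => simp only [tmMap_cons, List.length_cons, ih]; ring

lemma Cubefree.not_triple_infix {w : List Bool} (h : Cubefree w) (b : Bool) :
    ¬ [b, b, b] <:+: w := by
  simpa using h [b] (by simp)

lemma four_le_length_of_prefix_of_suffix {w : List Bool} (hp : [false, false] <+: w)
    (hs : [true, true] <:+ w) : 4 ≤ w.length := by
  obtain ⟨r, rfl⟩ := hp
  rcases r with _ | ⟨a, _ | ⟨b, r⟩⟩ <;> simp_all [List.suffix_cons_iff]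

lemma prefix_of_prefix_of_not_triple_infix {b : Bool} {w : List Bool} (hp : [b, b] <+: w)
    (h3 : ¬ [b, b, b] <:+: w) (hlen : 3 ≤ w.length) : [b, b, !b] <+: w := by
  obtain ⟨r, rfl⟩ := hp
  rcases r with _ | ⟨c, r⟩
  · simp at hlen
  · cases b <;> cases c <;> simp_all [List.infix_cons_iff]

lemma suffix_of_suffix_of_not_triple_infix {b : Bool} {w : List Bool} (hs : [b, b] <:+ w)
    (h3 : ¬ [b, b, b] <:+: w) (hlen : 3 ≤ w.length) : [!b, b, b] <:+ w := by
  have h3' : ¬ [b, b, b] <:+: w.reverse := fun h =>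
    h3 (by simpa using List.reverse_infix.2 h)
  have := prefix_of_prefix_of_not_triple_infix (by simpa using List.reverse_prefix.2 hs) h3'
    (by simpa using hlen)
  simpa using List.reverse_prefix.1 (by simpa using this)

lemma exists_triple_prefix_of_prefix_tmMap {w : List Bool}
    (h : [true, false, true, false, true] <+: tmMap w ∨
      [true, false, true, false, true] <+: (tmMap w).tail) :
    ∃ b, [b, b, b] <+: w := by
  have hlen : 3 ≤ w.length := by
    rcases h with h | h <;> have := h.length_le <;> simp [length_tmMap] at this <;> omega
  obtain ⟨a, b, c, v, rfl⟩ : ∃ a b c v, w = a :: b :: c :: v := by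
    rcases w with _ | ⟨a, _ | ⟨b, _ | ⟨c, v⟩⟩⟩ <;> simp_all
  cases a <;> cases b <;> cases c <;> simp_all

lemma exists_triple_infix_of_infix_tmMap {w : List Bool}
    (h : [true, false, true, false, true] <:+: tmMap w) : ∃ b, [b, b, b] <:+: w := by
  induction w with
  | nil => simp at h
  | cons a v ih =>
    rw [tmMap_cons, List.infix_cons_iff, List.infix_cons_iff, ← or_assoc] at h
    rcases h with h | h
    · obtain ⟨b, hb⟩ := exists_triple_prefix_of_prefix_tmMap (w := a :: v) (by simpa using h)
      exact ⟨b, hb.isInfix⟩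
    · obtain ⟨b, hb⟩ := ih h
      exact ⟨b, hb.trans (List.suffix_cons a v).isInfix⟩

theorem stmt14_general (w : List Bool)
    (hcf : Cubefree w)
    (hp : [false, false] <+: w) (hs : [true, true] <:+ w) :
    ∃ u : List Bool,
      tmMap w = u ++ [false, true, false] ∧
      [false, true, false, true, true] <+: u ∧
      [true, true] <:+ u ∧
      ¬ [true, false, true, false, true] <:+: u := by
  have hlen := four_le_length_of_prefix_of_suffix hp hs
  have hpre : [false, true, false, true, true] <+: tmMap w := by
    obtain ⟨t, rfl⟩ :=
      prefix_of_prefix_of_not_triple_infix hp (hcf.not_triple_infix false) (by omega)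
    simp
  obtain ⟨s, rfl⟩ :=
    suffix_of_suffix_of_not_triple_infix hs (hcf.not_triple_infix true) (by omega)
  set u := tmMap s ++ [false, true, true]
  have hw : tmMap (s ++ [false, true, true]) = u ++ [false, true, false] := by simp [u]
  have hu : u <+: tmMap (s ++ [false, true, true]) := ⟨_, hw.symm⟩
  refine ⟨u, hw, List.prefix_of_prefix_length_le hpre hu ?_,
    (List.suffix_cons false _).trans (List.suffix_append _ _), fun h => ?_⟩
  · simp [u, length_tmMap] at hlen ⊢
    omega
  · obtain ⟨b, hb⟩ := exists_triple_infix_of_infix_tmMap (h.trans hu.isInfix)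
    exact hcf.not_triple_infix b hb

theorem stmt14 (k : ℕ) (hk : 5 ≤ k) (w : List Bool)
    (hcf : Cubefree w) (hl : w.length = k + 4)
    (hp : [false, false] <+: w) (hs : [true, true] <:+ w) :
    ∃ u : List Bool,
      tmMap w = u ++ [false, true, false] ∧
      [false, true, false, true, true] <+: u ∧
      [true, true] <:+ u ∧
      ¬ [true, false, true, false, true] <:+: u :=
  stmt14_general w hcf hp hs
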